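/- arXiv:2008.07214 — 3 statements merged into one kernel-verified Lean document; each statement's English description precedes it below -/
import Mathlib

section
/- Let p ≥ 1, let g : ℝ^p → ℝ be convex and K-Lipschitz with respect to the Euclidean norm, let D be a p×p diagonal matrix whose diagonal entries all lie in [c₁, c₂] with 0 < c₁ ≤ c₂, let γ > 0, and let β ∈ ℝ^p. If q minimizes x ↦ g(x) + (1/(2γ)) ‖x − β‖_D² over ℝ^p, then (1/γ) ‖q − β‖_D² ≤ g(β) − g(q) ≤ K ‖q − β‖, and consequently ‖q − β‖ ≤ γK/c₁ (in the Euclidean norm). -/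
open scoped BigOperators
open MeasureTheory Filter

noncomputable def dInner {p : ℕ} (d : Fin p → ℝ) (x y : EuclideanSpace ℝ (Fin p)) : ℝ :=
  ∑ i, d i * x i * y i

noncomputable def dNorm {p : ℕ} (d : Fin p → ℝ) (x : EuclideanSpace ℝ (Fin p)) : ℝ :=
  Real.sqrt (dInner d x x)

noncomputable def dInvMul {p : ℕ} (d : Fin p → ℝ) (v : EuclideanSpace ℝ (Fin p)) :
    EuclideanSpace ℝ (Fin p) :=
  WithLp.toLp 2 (fun i => (d i)⁻¹ * v i)

lemma dInner_self_nonneg {p : ℕ} {d : Fin p → ℝ} (hd : ∀ i, 0 ≤ d i)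
    (v : EuclideanSpace ℝ (Fin p)) : 0 ≤ dInner d v v :=
  Finset.sum_nonneg fun i _ => by
    rw [mul_assoc]
    exact mul_nonneg (hd i) (mul_self_nonneg _)

lemma dNorm_smul {p : ℕ} (d : Fin p → ℝ) (t : ℝ) (v : EuclideanSpace ℝ (Fin p)) :
    dNorm d (t • v) = |t| * dNorm d v := by
  have hinner : dInner d (t • v) (t • v) = t ^ 2 * dInner d v v := by
    simp only [dInner, PiLp.smul_apply, smul_eq_mul, Finset.mul_sum]
    exact Finset.sum_congr rfl fun i _ => by ring
  rw [dNorm, dNorm, hinner, Real.sqrt_mul (sq_nonneg t), Real.sqrt_sq_eq_abs]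

lemma mul_norm_sq_le_dNorm_sq {p : ℕ} {d : Fin p → ℝ} {c : ℝ} (hc : 0 ≤ c) (hd : ∀ i, c ≤ d i)
    (v : EuclideanSpace ℝ (Fin p)) : c * ‖v‖ ^ 2 ≤ dNorm d v ^ 2 := by
  rw [dNorm, Real.sq_sqrt (dInner_self_nonneg (fun i => hc.trans (hd i)) v),
    EuclideanSpace.norm_sq_eq, Finset.mul_sum]
  refine Finset.sum_le_sum fun i _ => ?_
  rw [Real.norm_eq_abs, sq_abs, mul_assoc, ← sq]
  exact mul_le_mul_of_nonneg_right (hd i) (sq_nonneg _)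

/-- Comparing `q` with the points `q + t • (β - q)`, `t ∈ (0, 1]`, and using convexity of `g`
gives `(2 - t) * Q (q - β) ≤ g β - g q`; let `t → 0`. -/
theorem ConvexOn.two_mul_le_sub_of_isMinOn_add {E : Type*} [AddCommGroup E] [Module ℝ E]
    {g Q : E → ℝ} (hg : ConvexOn ℝ Set.univ g) (hQ : ∀ (t : ℝ) v, Q (t • v) = t ^ 2 * Q v)
    {β q : E} (hq : IsMinOn (fun x => g x + Q (x - β)) Set.univ q) :
    2 * Q (q - β) ≤ g β - g q := by
  have hsegment : ∀ t ∈ Set.Ioc (0 : ℝ) 1, (2 - t) * Q (q - β) ≤ g β - g q := by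
    rintro t ⟨ht₀, ht₁⟩
    have hmin := isMinOn_univ_iff.mp hq ((1 - t) • q + t • β)
    have hshift : (1 - t) • q + t • β - β = (1 - t) • (q - β) := by module
    have hconv := hg.2 (Set.mem_univ q) (Set.mem_univ β) (sub_nonneg.mpr ht₁) ht₀.le
      (sub_add_cancel 1 t)
    simp only [hshift, hQ, smul_eq_mul] at hmin hconv
    have : t * ((2 - t) * Q (q - β)) ≤ t * (g β - g q) := by nlinarith
    exact le_of_mul_le_mul_left this ht₀
  have hlim : Tendsto (fun t : ℝ => (2 - t) * Q (q - β)) (nhdsWithin 0 (Set.Ioi 0))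
      (nhds (2 * Q (q - β))) := by
    have := ((continuous_const.sub continuous_id).mul continuous_const).tendsto
      (f := fun t : ℝ => (2 - t) * Q (q - β)) 0
    simpa using this.mono_left nhdsWithin_le_nhds
  exact le_of_tendsto hlim (eventually_of_mem (Ioc_mem_nhdsGT one_pos) hsegment)

lemma nonneg_of_forall_abs_sub_le {E : Type*} [NormedAddCommGroup E] [Nontrivial E]
    {g : E → ℝ} {K : ℝ} (hK : ∀ x y, |g x - g y| ≤ K * ‖x - y‖) : 0 ≤ K := by
  obtain ⟨x, hx⟩ := exists_ne (0 : E)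
  have := (abs_nonneg _).trans (hK x 0)
  rw [sub_zero] at this
  exact nonneg_of_mul_nonneg_left this (norm_pos_iff.mpr hx)

theorem stmt_3_general {p : ℕ} (hp : 1 ≤ p)
    (g : EuclideanSpace ℝ (Fin p) → ℝ) (hg : ConvexOn ℝ Set.univ g)
    (K : ℝ) (hK : ∀ x y : EuclideanSpace ℝ (Fin p), |g x - g y| ≤ K * ‖x - y‖)
    (c₁ c₂ : ℝ) (hc₁ : 0 < c₁)
    (d : Fin p → ℝ) (hd : ∀ i, d i ∈ Set.Icc c₁ c₂)
    (γ : ℝ) (hγ : 0 < γ)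
    (β q : EuclideanSpace ℝ (Fin p))
    (hq : ∀ x : EuclideanSpace ℝ (Fin p),
      g q + (1 / (2 * γ)) * (dNorm d (q - β)) ^ 2 ≤
        g x + (1 / (2 * γ)) * (dNorm d (x - β)) ^ 2) :
    (1 / γ) * (dNorm d (q - β)) ^ 2 ≤ g β - g q ∧
      g β - g q ≤ K * ‖q - β‖ ∧
      ‖q - β‖ ≤ γ * K / c₁ := by
  have hlower : (1 / γ) * dNorm d (q - β) ^ 2 ≤ g β - g q := by
    have := hg.two_mul_le_sub_of_isMinOn_add (Q := fun v => 1 / (2 * γ) * dNorm d v ^ 2)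
      (fun t v => by simp only [dNorm_smul, mul_pow, sq_abs]; ring) (isMinOn_univ_iff.mpr hq)
    field_simp at this ⊢
    linarith
  have hupper : g β - g q ≤ K * ‖q - β‖ :=
    (le_abs_self _).trans ((hK β q).trans_eq (by rw [norm_sub_rev]))
  have : Nonempty (Fin p) := ⟨⟨0, hp⟩⟩
  have hK₀ : 0 ≤ K := nonneg_of_forall_abs_sub_le hK
  have hcoercive := mul_norm_sq_le_dNorm_sq hc₁.le (fun i => (hd i).1) (q - β)
  refine ⟨hlower, hupper, (le_div_iff₀ hc₁).mpr ?_⟩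
  rcases (norm_nonneg (q - β)).eq_or_lt with hzero | hpos
  · rw [← hzero, zero_mul]
    positivity
  · rw [one_div, inv_mul_le_iff₀ hγ] at hlower
    nlinarith

/-- If `g` is convex and K-Lipschitz (Euclidean norm), the diagonal entries of
`D` lie in `[c₁, c₂]` with `0 < c₁ ≤ c₂`, and `q = Prox_{γ,g}^D(β)`, then
`(1/γ) ‖q − β‖_D² ≤ g β − g q ≤ K ‖q − β‖` and consequently `‖q − β‖ ≤ γK/c₁`. -/
theorem stmt_3 {p : ℕ} (hp : 1 ≤ p)
    (g : EuclideanSpace ℝ (Fin p) → ℝ) (hg : ConvexOn ℝ Set.univ g)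
    (K : ℝ) (hK : ∀ x y : EuclideanSpace ℝ (Fin p), |g x - g y| ≤ K * ‖x - y‖)
    (c₁ c₂ : ℝ) (hc₁ : 0 < c₁) (hc₁₂ : c₁ ≤ c₂)
    (d : Fin p → ℝ) (hd : ∀ i, d i ∈ Set.Icc c₁ c₂)
    (γ : ℝ) (hγ : 0 < γ)
    (β q : EuclideanSpace ℝ (Fin p))
    (hq : ∀ x : EuclideanSpace ℝ (Fin p),
      g q + (1 / (2 * γ)) * (dNorm d (q - β)) ^ 2 ≤
        g x + (1 / (2 * γ)) * (dNorm d (x - β)) ^ 2) :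
    (1 / γ) * (dNorm d (q - β)) ^ 2 ≤ g β - g q ∧
      g β - g q ≤ K * ‖q - β‖ ∧
      ‖q - β‖ ≤ γ * K / c₁ :=
  stmt_3_general hp g hg K hK c₁ c₂ hc₁ d hd γ hγ β q hq
end

section
/- Let p ≥ 1, let h : ℝ^p → ℝ be convex and differentiable with ∇h Lipschitz continuous with constant L > 0 (Euclidean norm), let g : ℝ^p → ℝ be convex, and set F = h + g. Let D be a p×p diagonal matrix whose diagonal entries all lie in [c₁, c₂] with 0 < c₁ ≤ c₂, and let γ ∈ (0, c₁/L]. Let β, β⋆, G ∈ ℝ^p, set η = D⁻¹ G − D⁻¹ ∇h(β), and let β⁺ be a minimizer over ℝ^p of x ↦ g(x) + (1/(2γ)) ‖x − (β − γ D⁻¹ G)‖_D². Then ‖β⁺ − β⋆‖_D² ≤ ‖β − β⋆‖_D² − 2γ (F(β⁺) − F(β⋆)) − 2γ ⟨β⁺ − β⋆, η⟩_D. -/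
open scoped BigOperators
open MeasureTheory Filter

/-!
Writing `A = D^{1/2}`, the `D`-geometry is the Euclidean geometry seen through `A`, and the step
is a forward-backward step in it. Three inequalities are summed with weight `2γ`: the variational
inequality characterising the proximal point `β⁺` (from convexity of `g`), the descent lemma for
`h` between `β` and `β⁺`, whose quadratic term `(L/2)‖β⁺ - β‖²` is at most `‖β⁺ - β‖_D² / (2γ)`
because `γ L ≤ c₁`, and the gradient inequality for `h` between `β` and `β⋆`. What remains is the
three-point identity `‖β - β⋆‖_D² = ‖β⁺ - β⋆‖_D² - 2⟪β⁺ - β⋆, β⁺ - β⟫_D + ‖β⁺ - β‖_D²`.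
-/

open Set Topology
open scoped RealInnerProductSpace

lemma nonneg_of_forall_Ioo_nonneg_add_mul {a b : ℝ} (h : ∀ t ∈ Ioo (0 : ℝ) 1, 0 ≤ a + t * b) :
    0 ≤ a := by
  have hcont : Continuous fun t : ℝ => a + t * b := by fun_prop
  have hlim : Tendsto (fun t : ℝ => a + t * b) (𝓝[>] 0) (𝓝 a) :=
    (hcont.tendsto' 0 a (by simp)).mono_left nhdsWithin_le_nhds
  exact ge_of_tendsto hlim (eventually_of_mem (Ioo_mem_nhdsGT one_pos) h)

section Gradient

variable {E : Type*} [NormedAddCommGroup E] [InnerProductSpace ℝ E] [CompleteSpace E]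
  {f : E → ℝ}

lemma HasGradientAt.hasDerivAt_comp_lineMap {x y g : E} {t : ℝ}
    (hf : HasGradientAt f g (AffineMap.lineMap x y t)) :
    HasDerivAt (f ∘ AffineMap.lineMap (k := ℝ) x y) ⟪g, y - x⟫ t := by
  simpa using hf.hasFDerivAt.comp_hasDerivAt t AffineMap.hasDerivAt_lineMap

theorem ConvexOn.add_inner_gradient_le {s : Set E} {x y g : E} (hf : ConvexOn ℝ s f)
    (hx : x ∈ s) (hy : y ∈ s) (hg : HasGradientAt f g x) :
    f x + ⟪g, y - x⟫ ≤ f y := by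
  have hline := hf.comp_affineMap (AffineMap.lineMap (k := ℝ) x y)
  have hderiv : HasDerivAt (f ∘ AffineMap.lineMap (k := ℝ) x y) ⟪g, y - x⟫ 0 :=
    HasGradientAt.hasDerivAt_comp_lineMap (by simpa using hg)
  have := hline.le_slope_of_hasDerivAt (x := 0) (y := 1) (by simpa) (by simpa) one_pos hderiv
  simp only [slope_def_field, Function.comp_apply, AffineMap.lineMap_apply_one,
    AffineMap.lineMap_apply_zero, sub_zero, div_one] at this
  linarith

theorem le_add_inner_gradient_add_of_lipschitz {f' : E → E} {L : ℝ}
    (hf : ∀ x, HasGradientAt f (f' x) x) (hlip : ∀ x y, ‖f' x - f' y‖ ≤ L * ‖x - y‖) (x y : E) :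
    f y ≤ f x + ⟪f' x, y - x⟫ + L / 2 * ‖y - x‖ ^ 2 := by
  set φ : ℝ → ℝ := fun t => (f ∘ AffineMap.lineMap (k := ℝ) x y) t - t * ⟪f' x, y - x⟫
  have hφ : ∀ t, HasDerivAt φ ⟪f' (AffineMap.lineMap x y t) - f' x, y - x⟫ t := fun t => by
    rw [inner_sub_left]
    exact (hf _).hasDerivAt_comp_lineMap.sub (by simpa using (hasDerivAt_id t).mul_const _)
  have hB : ∀ t, HasDerivAt (fun t : ℝ => f x + L / 2 * ‖y - x‖ ^ 2 * t ^ 2)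
      (L * ‖y - x‖ ^ 2 * t) t := fun t => by
    refine (((hasDerivAt_pow 2 t).const_mul _).const_add (f x)).congr_deriv ?_
    push_cast
    ring
  have hbound : ∀ t ∈ Ico (0 : ℝ) 1,
      ⟪f' (AffineMap.lineMap x y t) - f' x, y - x⟫ ≤ L * ‖y - x‖ ^ 2 * t := by
    rintro t ⟨ht, -⟩
    have hdist : ‖AffineMap.lineMap x y t - x‖ = t * ‖y - x‖ := by
      rw [← vsub_eq_sub, AffineMap.lineMap_vsub_left, norm_smul, Real.norm_of_nonneg ht,
        vsub_eq_sub]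
    calc ⟪f' (AffineMap.lineMap x y t) - f' x, y - x⟫
        ≤ ‖f' (AffineMap.lineMap x y t) - f' x‖ * ‖y - x‖ := real_inner_le_norm _ _
      _ ≤ L * ‖AffineMap.lineMap x y t - x‖ * ‖y - x‖ := by gcongr; exact hlip _ _
      _ = L * ‖y - x‖ ^ 2 * t := by rw [hdist]; ring
  have := image_le_of_deriv_right_le_deriv_boundary (a := 0) (b := 1) (f := φ)
    (fun t _ => (hφ t).continuousAt.continuousWithinAt) (fun t _ => (hφ t).hasDerivWithinAt)
    (by simp [φ]) (fun t _ => (hB t).continuousAt.continuousWithinAt)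
    (fun t _ => (hB t).hasDerivWithinAt) hbound (right_mem_Icc.2 zero_le_one)
  simp only [φ, Function.comp_apply, AffineMap.lineMap_apply_one, one_mul, one_pow,
    mul_one] at this
  linarith

end Gradient

section ProximalStep

variable {E F : Type*} [NormedAddCommGroup F] [InnerProductSpace ℝ F]

/-- First-order optimality of a proximal point: `2c A†A (z - u)` is a subgradient of `g` at `u`. -/
theorem ConvexOn.le_add_inner_of_isMinOn_add_sq_norm [AddCommGroup E] [Module ℝ E] {g : E → ℝ}
    (hg : ConvexOn ℝ univ g) (A : E →ₗ[ℝ] F) {c : ℝ} {u z : E}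
    (hu : IsMinOn (fun x => g x + c * ‖A (x - z)‖ ^ 2) univ u) (x : E) :
    g u ≤ g x + 2 * c * ⟪A (u - z), A (x - u)⟫ := by
  suffices 0 ≤ g x - g u + 2 * c * ⟪A (u - z), A (x - u)⟫ by linarith
  refine nonneg_of_forall_Ioo_nonneg_add_mul (b := c * ‖A (x - u)‖ ^ 2) fun t ⟨ht0, ht1⟩ => ?_
  have hmin := isMinOn_univ_iff.1 hu (u + t • (x - u))
  have hconv : g (u + t • (x - u)) ≤ (1 - t) * g u + t * g x := by
    rw [show u + t • (x - u) = (1 - t) • u + t • x by module]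
    exact hg.2 (mem_univ u) (mem_univ x) (by linarith) ht0.le (by ring)
  have hexp : ‖A (u + t • (x - u) - z)‖ ^ 2
      = ‖A (u - z)‖ ^ 2 + 2 * t * ⟪A (u - z), A (x - u)⟫ + t ^ 2 * ‖A (x - u)‖ ^ 2 := by
    rw [show u + t • (x - u) - z = (u - z) + t • (x - u) by abel, map_add, map_smul,
      norm_add_sq_real, inner_smul_right, norm_smul, Real.norm_of_nonneg ht0.le]
    ring
  rw [hexp] at hmin
  refine nonneg_of_mul_nonneg_right ?_ ht0
  linear_combination hmin + hconv

/-- `u` is the proximal-gradient step from `β` along `w` in the metric `‖A ·‖`, and `hm` says that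
`A†A m = ∇h(β)`, i.e. `m` is the gradient of `h` at `β` in that metric. -/
theorem sq_norm_sub_le_of_proxGradient_step [NormedAddCommGroup E] [InnerProductSpace ℝ E]
    [CompleteSpace E] {h g : E → ℝ} {h' : E → E} {L c γ : ℝ}
    (hh : ConvexOn ℝ univ h) (hdiff : ∀ x, HasGradientAt h (h' x) x)
    (hlip : ∀ x y, ‖h' x - h' y‖ ≤ L * ‖x - y‖) (hg : ConvexOn ℝ univ g)
    (A : E →ₗ[ℝ] F) (hA : ∀ x, c * ‖x‖ ^ 2 ≤ ‖A x‖ ^ 2) (hγ : 0 < γ) (hγL : γ * L ≤ c)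
    {β s w m u : E} (hm : ∀ x, ⟪A x, A m⟫ = ⟪h' β, x⟫)
    (hu : IsMinOn (fun x => g x + 1 / (2 * γ) * ‖A (x - (β - γ • w))‖ ^ 2) univ u) :
    ‖A (u - s)‖ ^ 2 ≤ ‖A (β - s)‖ ^ 2 - 2 * γ * ((h u + g u) - (h s + g s))
      - 2 * γ * ⟪A (u - s), A (w - m)⟫ := by
  have hprox := hg.le_add_inner_of_isMinOn_add_sq_norm A hu s
  have hdesc := le_add_inner_gradient_add_of_lipschitz hdiff hlip β u
  have hconv := hh.add_inner_gradient_le (mem_univ β) (mem_univ s) (hdiff β)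
  have hcurv : γ * (L * ‖u - β‖ ^ 2) ≤ ‖A (u - β)‖ ^ 2 := by
    rw [← mul_assoc]
    exact (mul_le_mul_of_nonneg_right hγL (sq_nonneg _)).trans (hA _)
  rw [← hm] at hdesc hconv
  set x := A (u - s)
  set y := A (u - β)
  have hz : A (u - (β - γ • w)) = y + γ • A w := by rw [← map_smul, ← map_add]; congr 1; abel
  have hsu : A (s - u) = -x := by rw [← map_neg, neg_sub]
  have hβs : A (β - s) = x - y := by rw [← map_sub]; congr 1; abel
  have hsβ : A (s - β) = y - x := by rw [← map_sub]; congr 1; abel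
  rw [hz, hsu] at hprox
  rw [hsβ] at hconv
  rw [hβs, map_sub, norm_sub_sq_real, inner_sub_right]
  simp only [inner_add_left, inner_neg_right, inner_sub_left, real_inner_smul_left] at hprox hconv
  rw [real_inner_comm x y, real_inner_comm x (A w)] at hprox
  have hγc : 2 * γ * (1 / (2 * γ)) = 1 := by field_simp
  have h1 := mul_le_mul_of_nonneg_left hprox (by positivity : (0 : ℝ) ≤ 2 * γ)
  have h2 := mul_le_mul_of_nonneg_left (add_le_add hdesc hconv) (by positivity : (0 : ℝ) ≤ 2 * γ)
  linear_combination h1 + h2 + hcurv - 2 * (⟪x, y⟫ + γ * ⟪x, A w⟫) * hγc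

end ProximalStep

section DiagonalScaling

variable {p : ℕ} {d : Fin p → ℝ}

noncomputable def diagSqrt (d : Fin p → ℝ) :
    EuclideanSpace ℝ (Fin p) →ₗ[ℝ] EuclideanSpace ℝ (Fin p) where
  toFun x := WithLp.toLp 2 fun i => √(d i) * x i
  map_add' x y := by ext i; simp only [PiLp.add_apply]; ring
  map_smul' t x := by ext i; simp only [PiLp.smul_apply, smul_eq_mul, RingHom.id_apply]; ring

lemma diagSqrt_apply (x : EuclideanSpace ℝ (Fin p)) (i : Fin p) :
    diagSqrt d x i = √(d i) * x i := rfl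

lemma inner_diagSqrt (hd : ∀ i, 0 ≤ d i) (x y : EuclideanSpace ℝ (Fin p)) :
    ⟪diagSqrt d x, diagSqrt d y⟫ = dInner d x y := by
  simp only [PiLp.inner_apply, diagSqrt_apply, RCLike.inner_apply, conj_trivial, dInner]
  refine Finset.sum_congr rfl fun i _ => ?_
  linear_combination (x i * y i) * Real.sq_sqrt (hd i)

lemma norm_diagSqrt (hd : ∀ i, 0 ≤ d i) (x : EuclideanSpace ℝ (Fin p)) :
    ‖diagSqrt d x‖ = dNorm d x := by
  rw [norm_eq_sqrt_real_inner, inner_diagSqrt hd, dNorm]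

lemma inner_diagSqrt_dInvMul (hd : ∀ i, 0 < d i) (x v : EuclideanSpace ℝ (Fin p)) :
    ⟪diagSqrt d x, diagSqrt d (dInvMul d v)⟫ = ⟪v, x⟫ := by
  rw [inner_diagSqrt fun i => (hd i).le]
  simp only [dInner, dInvMul, PiLp.inner_apply, RCLike.inner_apply, conj_trivial]
  refine Finset.sum_congr rfl fun i _ => ?_
  field_simp [(hd i).ne']

lemma le_sq_norm_diagSqrt {c : ℝ} (hc : 0 ≤ c) (hd : ∀ i, c ≤ d i)
    (x : EuclideanSpace ℝ (Fin p)) : c * ‖x‖ ^ 2 ≤ ‖diagSqrt d x‖ ^ 2 := by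
  simp only [EuclideanSpace.norm_sq_eq, diagSqrt_apply, Real.norm_eq_abs, sq_abs, mul_pow,
    Finset.mul_sum]
  exact Finset.sum_le_sum fun i _ => by
    rw [Real.sq_sqrt (hc.trans (hd i))]
    exact mul_le_mul_of_nonneg_right (hd i) (sq_nonneg _)

end DiagonalScaling

theorem stmt_5_general {p : ℕ}
    (h g : EuclideanSpace ℝ (Fin p) → ℝ)
    (h' : EuclideanSpace ℝ (Fin p) → EuclideanSpace ℝ (Fin p))
    (hh : ConvexOn ℝ Set.univ h)
    (hdiff : ∀ x, HasGradientAt h (h' x) x)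
    (L : ℝ) (hL : 0 < L)
    (hlip : ∀ x y : EuclideanSpace ℝ (Fin p), ‖h' x - h' y‖ ≤ L * ‖x - y‖)
    (hg : ConvexOn ℝ Set.univ g)
    (c₁ c₂ : ℝ) (hc₁ : 0 < c₁)
    (d : Fin p → ℝ) (hd : ∀ i, d i ∈ Set.Icc c₁ c₂)
    (γ : ℝ) (hγ : 0 < γ) (hγL : γ ≤ c₁ / L)
    (β βstar G βplus : EuclideanSpace ℝ (Fin p))
    (hβplus : ∀ x : EuclideanSpace ℝ (Fin p),
      g βplus + (1 / (2 * γ)) * (dNorm d (βplus - (β - γ • dInvMul d G))) ^ 2 ≤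
        g x + (1 / (2 * γ)) * (dNorm d (x - (β - γ • dInvMul d G))) ^ 2) :
    (dNorm d (βplus - βstar)) ^ 2 ≤
      (dNorm d (β - βstar)) ^ 2 -
        2 * γ * ((h βplus + g βplus) - (h βstar + g βstar)) -
        2 * γ * dInner d (βplus - βstar) (dInvMul d G - dInvMul d (h' β)) := by
  have hd_pos : ∀ i, 0 < d i := fun i => hc₁.trans_le (hd i).1
  have hd_nonneg : ∀ i, 0 ≤ d i := fun i => (hd_pos i).le
  have hstep := sq_norm_sub_le_of_proxGradient_step hh hdiff hlip hg (diagSqrt d)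
    (le_sq_norm_diagSqrt hc₁.le fun i => (hd i).1) hγ ((le_div_iff₀ hL).1 hγL) (s := βstar)
    (fun x => inner_diagSqrt_dInvMul hd_pos x (h' β))
    (isMinOn_univ_iff.2 fun x => by simpa only [norm_diagSqrt hd_nonneg] using hβplus x)
  simpa only [norm_diagSqrt hd_nonneg, inner_diagSqrt hd_nonneg] using hstep

/-- One-step descent inequality for the quasi-Newton stochastic proximal update
`β⁺ = Prox_{γ,g}^D(β − γ D⁻¹ G)` with `η = D⁻¹G − D⁻¹∇h(β)`:
`‖β⁺ − β⋆‖_D² ≤ ‖β − β⋆‖_D² − 2γ(F(β⁺) − F(β⋆)) − 2γ⟨β⁺ − β⋆, η⟩_D`. -/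
theorem stmt_5 {p : ℕ} (hp : 1 ≤ p)
    (h g : EuclideanSpace ℝ (Fin p) → ℝ)
    (h' : EuclideanSpace ℝ (Fin p) → EuclideanSpace ℝ (Fin p))
    (hh : ConvexOn ℝ Set.univ h)
    (hdiff : ∀ x, HasGradientAt h (h' x) x)
    (L : ℝ) (hL : 0 < L)
    (hlip : ∀ x y : EuclideanSpace ℝ (Fin p), ‖h' x - h' y‖ ≤ L * ‖x - y‖)
    (hg : ConvexOn ℝ Set.univ g)
    (c₁ c₂ : ℝ) (hc₁ : 0 < c₁) (hc₁₂ : c₁ ≤ c₂)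
    (d : Fin p → ℝ) (hd : ∀ i, d i ∈ Set.Icc c₁ c₂)
    (γ : ℝ) (hγ : 0 < γ) (hγL : γ ≤ c₁ / L)
    (β βstar G βplus : EuclideanSpace ℝ (Fin p))
    (hβplus : ∀ x : EuclideanSpace ℝ (Fin p),
      g βplus + (1 / (2 * γ)) * (dNorm d (βplus - (β - γ • dInvMul d G))) ^ 2 ≤
        g x + (1 / (2 * γ)) * (dNorm d (x - (β - γ • dInvMul d G))) ^ 2) :
    (dNorm d (βplus - βstar)) ^ 2 ≤
      (dNorm d (β - βstar)) ^ 2 -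
        2 * γ * ((h βplus + g βplus) - (h βstar + g βstar)) -
        2 * γ * dInner d (βplus - βstar) (dInvMul d G - dInvMul d (h' β)) :=
  stmt_5_general h g h' hh hdiff L hL hlip hg c₁ c₂ hc₁ d hd γ hγ hγL β βstar G βplus hβplus
end

section
/- Let p ≥ 1, let h : ℝ^p → ℝ be differentiable with ∇h Lipschitz continuous with constant L > 0 (Euclidean norm), let g : ℝ^p → ℝ be convex, let D be a p×p diagonal matrix whose diagonal entries all lie in [c₁, c₂] with 0 < c₁ ≤ c₂, and let γ > 0. For β ∈ ℝ^p let T_γ(β) denote a minimizer over ℝ^p of x ↦ g(x) + (1/(2γ)) ‖x − (β − γ D⁻¹ ∇h(β))‖_D². Then for all β, β' ∈ ℝ^p, ‖T_γ(β) − T_γ(β')‖ ≤ √(c₂/c₁) · (1 + γL/c₁) · ‖β − β'‖ (Euclidean norms). -/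
open scoped BigOperators
open MeasureTheory Filter

open scoped RealInnerProductSpace Topology

/-! Writing `W = D^{1/2}`, the `D`-norm is `‖W ·‖`, and the prox map is firmly nonexpansive for
the norm `‖W ·‖`: adding the first-order optimality conditions at two minimizers `z₁, z₂`
(obtained by perturbing along segments, using convexity of `g`) gives
`‖W (z₁ - z₂)‖² ≤ ⟪W (u₁ - u₂), W (z₁ - z₂)⟫`. Hence `‖W (T β - T β')‖` is at most the `W`-norm of
the difference of the gradient steps, and comparing `‖W ·‖` with the Euclidean norm through
`√c₁ ≤ √(d i) ≤ √c₂` yields the bound `√(c₂/c₁) + γL/c₁ ≤ √(c₂/c₁) (1 + γL/c₁)`. -/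

lemma nonpos_of_forall_le_mul {C K : ℝ} (h : ∀ t ∈ Set.Ioc (0 : ℝ) 1, C ≤ t * K) : C ≤ 0 := by
  have hlim : Tendsto (fun t : ℝ => t * K) (𝓝[>] 0) (𝓝 0) := by
    simpa using ((continuous_mul_const K).tendsto 0).mono_left nhdsWithin_le_nhds
  refine ge_of_tendsto hlim ?_
  filter_upwards [Ioc_mem_nhdsGT one_pos] with t ht using h t ht

section Prox

variable {E F : Type*} [AddCommGroup E] [Module ℝ E]
  [NormedAddCommGroup F] [InnerProductSpace ℝ F]

lemma ConvexOn.le_add_inner_of_forall_le {g : E → ℝ} (hg : ConvexOn ℝ Set.univ g)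
    (A : E →ₗ[ℝ] F) {c : ℝ} {u z : E}
    (hz : ∀ x, g z + c * ‖A (z - u)‖ ^ 2 ≤ g x + c * ‖A (x - u)‖ ^ 2) (x : E) :
    g z ≤ g x + 2 * c * ⟪A (z - u), A (x - z)⟫ := by
  set v := A (z - u)
  set w := A (x - z)
  suffices g z - g x - 2 * c * ⟪v, w⟫ ≤ 0 by linarith
  refine nonpos_of_forall_le_mul (K := c * ‖w‖ ^ 2) fun t ⟨ht₀, ht₁⟩ => ?_
  have hconv : g ((1 - t) • z + t • x) ≤ (1 - t) * g z + t * g x :=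
    hg.2 (Set.mem_univ z) (Set.mem_univ x) (by linarith) ht₀.le (by ring)
  have hmin := hz ((1 - t) • z + t • x)
  have hseg : A ((1 - t) • z + t • x - u) = v + t • w := by
    rw [← map_smul, ← map_add]; congr 1; module
  rw [hseg, norm_add_sq_real, inner_smul_right, norm_smul, Real.norm_eq_abs, mul_pow, sq_abs]
    at hmin
  have : t * (g z - g x - 2 * c * ⟪v, w⟫) ≤ t * (t * (c * ‖w‖ ^ 2)) := by nlinarith
  exact le_of_mul_le_mul_left this ht₀

lemma norm_map_sub_le_of_forall_le {g : E → ℝ} (hg : ConvexOn ℝ Set.univ g)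
    (A : E →ₗ[ℝ] F) {c : ℝ} (hc : 0 < c) {u₁ u₂ z₁ z₂ : E}
    (hz₁ : ∀ x, g z₁ + c * ‖A (z₁ - u₁)‖ ^ 2 ≤ g x + c * ‖A (x - u₁)‖ ^ 2)
    (hz₂ : ∀ x, g z₂ + c * ‖A (z₂ - u₂)‖ ^ 2 ≤ g x + c * ‖A (x - u₂)‖ ^ 2) :
    ‖A (z₁ - z₂)‖ ≤ ‖A (u₁ - u₂)‖ := by
  have h₁ := hg.le_add_inner_of_forall_le A hz₁ z₂
  have h₂ := hg.le_add_inner_of_forall_le A hz₂ z₁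
  have hsum : 0 ≤ ⟪A (z₁ - u₁), A (z₂ - z₁)⟫ + ⟪A (z₂ - u₂), A (z₁ - z₂)⟫ := by
    nlinarith
  have hfirm : ‖A (z₁ - z₂)‖ ^ 2 ≤ ⟪A (u₁ - u₂), A (z₁ - z₂)⟫ := by
    simp only [map_sub, inner_sub_left, inner_sub_right, real_inner_self_eq_norm_sq,
      norm_sub_sq_real] at hsum ⊢
    linarith [real_inner_comm (A z₁) (A z₂), real_inner_comm (A u₁) (A z₂),
      real_inner_comm (A u₂) (A z₁)]
  nlinarith [real_inner_le_norm (A (u₁ - u₂)) (A (z₁ - z₂)), norm_nonneg (A (z₁ - z₂)),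
    norm_nonneg (A (u₁ - u₂))]

end Prox

section DiagScale

variable {ι : Type*}

noncomputable def diagScale (w : ι → ℝ) : EuclideanSpace ℝ ι →ₗ[ℝ] EuclideanSpace ℝ ι where
  toFun x := WithLp.toLp 2 fun i => w i * x i
  map_add' x y := by ext i; simp [mul_add]
  map_smul' a x := by ext i; simp [mul_left_comm]

@[simp]
lemma diagScale_apply (w : ι → ℝ) (x : EuclideanSpace ℝ ι) (i : ι) :
    diagScale w x i = w i * x i := rfl

lemma norm_diagScale_le [Fintype ι] {w : ι → ℝ} {K : ℝ} (hK : 0 ≤ K) (hw : ∀ i, |w i| ≤ K)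
    (x : EuclideanSpace ℝ ι) : ‖diagScale w x‖ ≤ K * ‖x‖ := by
  rw [EuclideanSpace.norm_eq, EuclideanSpace.norm_eq, ← Real.sqrt_sq hK,
    ← Real.sqrt_mul (sq_nonneg K), Finset.mul_sum]
  gcongr with i
  rw [diagScale_apply, norm_mul, mul_pow, Real.norm_eq_abs]
  gcongr
  exact hw i

lemma le_norm_diagScale [Fintype ι] {w : ι → ℝ} {K : ℝ} (hK : 0 ≤ K) (hw : ∀ i, K ≤ |w i|)
    (x : EuclideanSpace ℝ ι) : K * ‖x‖ ≤ ‖diagScale w x‖ := by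
  rw [EuclideanSpace.norm_eq, EuclideanSpace.norm_eq, ← Real.sqrt_sq hK,
    ← Real.sqrt_mul (sq_nonneg K), Finset.mul_sum]
  gcongr with i
  rw [diagScale_apply, norm_mul, mul_pow, Real.norm_eq_abs]
  gcongr
  exact hw i

end DiagScale

section DiagonalWeights

variable {p : ℕ} {d : Fin p → ℝ} {c : ℝ}

lemma dNorm_eq_norm_diagScale (hd : ∀ i, 0 ≤ d i) (x : EuclideanSpace ℝ (Fin p)) :
    dNorm d x = ‖diagScale (fun i => √(d i)) x‖ := by
  rw [dNorm, dInner, EuclideanSpace.norm_eq]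
  congr 1
  refine Finset.sum_congr rfl fun i _ => ?_
  rw [diagScale_apply, Real.norm_eq_abs, sq_abs, mul_pow, Real.sq_sqrt (hd i)]
  ring

lemma dInvMul_sub (d : Fin p → ℝ) (v w : EuclideanSpace ℝ (Fin p)) :
    dInvMul d (v - w) = dInvMul d v - dInvMul d w := by
  ext i
  simp only [dInvMul, PiLp.sub_apply, mul_sub]

lemma sqrt_mul_norm_le_norm_diagScale_sqrt (hd : ∀ i, c ≤ d i) (x : EuclideanSpace ℝ (Fin p)) :
    √c * ‖x‖ ≤ ‖diagScale (fun i => √(d i)) x‖ :=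
  le_norm_diagScale (Real.sqrt_nonneg c) (fun i => by
    rw [abs_of_nonneg (Real.sqrt_nonneg _)]; exact Real.sqrt_le_sqrt (hd i)) x

lemma norm_diagScale_sqrt_le (hd : ∀ i, d i ≤ c) (x : EuclideanSpace ℝ (Fin p)) :
    ‖diagScale (fun i => √(d i)) x‖ ≤ √c * ‖x‖ :=
  norm_diagScale_le (Real.sqrt_nonneg c) (fun i => by
    rw [abs_of_nonneg (Real.sqrt_nonneg _)]; exact Real.sqrt_le_sqrt (hd i)) x

lemma norm_diagScale_sqrt_dInvMul_le (hc : 0 < c) (hd : ∀ i, c ≤ d i)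
    (v : EuclideanSpace ℝ (Fin p)) :
    ‖diagScale (fun i => √(d i)) (dInvMul d v)‖ ≤ (√c)⁻¹ * ‖v‖ := by
  have hdiag : diagScale (fun i => √(d i)) (dInvMul d v) = diagScale (fun i => (√(d i))⁻¹) v := by
    ext i
    rw [diagScale_apply, diagScale_apply, dInvMul, PiLp.toLp_apply, ← Real.sqrt_div_self]
    ring
  rw [hdiag]
  refine norm_diagScale_le (by positivity) (fun i => ?_) v
  rw [abs_of_nonneg (by positivity)]
  exact inv_anti₀ (Real.sqrt_pos.2 hc) (Real.sqrt_le_sqrt (hd i))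

lemma norm_diagScale_sqrt_gradStep_sub_le {c₁ c₂ γ : ℝ} (hc₁ : 0 < c₁)
    (hd : ∀ i, d i ∈ Set.Icc c₁ c₂) (hγ : 0 ≤ γ) (β β' a a' : EuclideanSpace ℝ (Fin p)) :
    ‖diagScale (fun i => √(d i)) ((β - γ • dInvMul d a) - (β' - γ • dInvMul d a'))‖ ≤
      √c₂ * ‖β - β'‖ + γ * ((√c₁)⁻¹ * ‖a - a'‖) := by
  rw [show (β - γ • dInvMul d a) - (β' - γ • dInvMul d a') = (β - β') - γ • dInvMul d (a - a') by
    rw [dInvMul_sub]; module, map_sub, map_smul]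
  refine (norm_sub_le _ _).trans (add_le_add (norm_diagScale_sqrt_le (fun i => (hd i).2) _) ?_)
  rw [norm_smul, Real.norm_of_nonneg hγ]
  gcongr
  exact norm_diagScale_sqrt_dInvMul_le hc₁ (fun i => (hd i).1) _

end DiagonalWeights

theorem stmt_7_general {p : ℕ}
    (g : EuclideanSpace ℝ (Fin p) → ℝ)
    (h' : EuclideanSpace ℝ (Fin p) → EuclideanSpace ℝ (Fin p))
    (L : ℝ)
    (hlip : ∀ x y : EuclideanSpace ℝ (Fin p), ‖h' x - h' y‖ ≤ L * ‖x - y‖)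
    (hg : ConvexOn ℝ Set.univ g)
    (c₁ c₂ : ℝ) (hc₁ : 0 < c₁) (hc₁₂ : c₁ ≤ c₂)
    (d : Fin p → ℝ) (hd : ∀ i, d i ∈ Set.Icc c₁ c₂)
    (γ : ℝ) (hγ : 0 < γ)
    (T : EuclideanSpace ℝ (Fin p) → EuclideanSpace ℝ (Fin p))
    (hT : ∀ b x : EuclideanSpace ℝ (Fin p),
      g (T b) + (1 / (2 * γ)) * (dNorm d (T b - (b - γ • dInvMul d (h' b)))) ^ 2 ≤
        g x + (1 / (2 * γ)) * (dNorm d (x - (b - γ • dInvMul d (h' b)))) ^ 2) :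
    ∀ β β' : EuclideanSpace ℝ (Fin p),
      ‖T β - T β'‖ ≤ Real.sqrt (c₂ / c₁) * (1 + γ * L / c₁) * ‖β - β'‖ := by
  intro β β'
  simp only [dNorm_eq_norm_diagScale fun i => hc₁.le.trans (hd i).1] at hT
  have hprox := norm_map_sub_le_of_forall_le hg _ (by positivity) (hT β) (hT β')
  have hstep := norm_diagScale_sqrt_gradStep_sub_le hc₁ hd hγ.le β β' (h' β) (h' β')
  have hs₁ : 1 ≤ √(c₂ / c₁) := Real.one_le_sqrt.2 ((one_le_div hc₁).2 hc₁₂)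
  have hLn : 0 ≤ γ / c₁ * (L * ‖β - β'‖) :=
    mul_nonneg (by positivity) ((norm_nonneg _).trans (hlip β β'))
  calc ‖T β - T β'‖ = (√c₁)⁻¹ * (√c₁ * ‖T β - T β'‖) := by field_simp
    _ ≤ (√c₁)⁻¹ * (√c₂ * ‖β - β'‖ + γ * ((√c₁)⁻¹ * (L * ‖β - β'‖))) := by
      gcongr
      exact (sqrt_mul_norm_le_norm_diagScale_sqrt (fun i => (hd i).1) _).trans
        (hprox.trans (hstep.trans (by gcongr; exact hlip β β')))
    _ = √(c₂ / c₁) * ‖β - β'‖ + γ / c₁ * (L * ‖β - β'‖) := by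
      have hc : √c₁ * √c₁ = c₁ := Real.mul_self_sqrt hc₁.le
      rw [Real.sqrt_div' _ hc₁.le]; field_simp; linear_combination (-(‖β - β'‖ * γ * L)) * hc
    _ ≤ √(c₂ / c₁) * ‖β - β'‖ + √(c₂ / c₁) * (γ / c₁ * (L * ‖β - β'‖)) := by
      linarith [le_mul_of_one_le_left hLn hs₁]
    _ = √(c₂ / c₁) * (1 + γ * L / c₁) * ‖β - β'‖ := by ring

/-- For `h` differentiable with L-Lipschitz gradient, `g` convex, `D` diagonal
with entries in `[c₁, c₂]` and `γ > 0`, the proximal-gradient operator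
`T_γ(β) = Prox_{γ,g}^D(β − γ D⁻¹∇h(β))` satisfies
`‖T_γ(β) − T_γ(β')‖ ≤ √(c₂/c₁) (1 + γL/c₁) ‖β − β'‖` for all `β, β'`. -/
theorem stmt_7 {p : ℕ} (hp : 1 ≤ p)
    (h g : EuclideanSpace ℝ (Fin p) → ℝ)
    (h' : EuclideanSpace ℝ (Fin p) → EuclideanSpace ℝ (Fin p))
    (hdiff : ∀ x, HasGradientAt h (h' x) x)
    (L : ℝ) (hL : 0 < L)
    (hlip : ∀ x y : EuclideanSpace ℝ (Fin p), ‖h' x - h' y‖ ≤ L * ‖x - y‖)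
    (hg : ConvexOn ℝ Set.univ g)
    (c₁ c₂ : ℝ) (hc₁ : 0 < c₁) (hc₁₂ : c₁ ≤ c₂)
    (d : Fin p → ℝ) (hd : ∀ i, d i ∈ Set.Icc c₁ c₂)
    (γ : ℝ) (hγ : 0 < γ)
    (T : EuclideanSpace ℝ (Fin p) → EuclideanSpace ℝ (Fin p))
    (hT : ∀ b x : EuclideanSpace ℝ (Fin p),
      g (T b) + (1 / (2 * γ)) * (dNorm d (T b - (b - γ • dInvMul d (h' b)))) ^ 2 ≤
        g x + (1 / (2 * γ)) * (dNorm d (x - (b - γ • dInvMul d (h' b)))) ^ 2) :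
    ∀ β β' : EuclideanSpace ℝ (Fin p),
      ‖T β - T β'‖ ≤ Real.sqrt (c₂ / c₁) * (1 + γ * L / c₁) * ‖β - β'‖ :=
  stmt_7_general g h' L hlip hg c₁ c₂ hc₁ hc₁₂ d hd γ hγ T hT
end
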